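/- Lifting lemma (second half of Proposition 1): for every s ∈ L(G), the string μ ∈ Ẽ* obtained from s by inserting, immediately after each occurrence of each event σ ∈ Σ, the delivery events f_ij(σ) for every pair (i,j) with σ ∈ Σij (in some fixed order of the pairs), satisfies μ ∈ L(G̃) and ψ(μ) = s; consequently L(G) ⊆ ψ(L(G̃)). -/

import Mathlib

open scoped Classical

/-- Plant events: the tick event or an ordinary event of `S`. -/
inductive PEv (S : Type) where
  | tick : PEv S
  | ev : S → PEv S

/-- Events of the communication automaton `G̃`: plant events, delivery events
`f_ij(σ)` and loss events `g_ij(d)`. -/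
inductive CEv (S : Type) (n : ℕ) where
  | tick : CEv S n
  | ev : S → CEv S n
  | del : Fin n → Fin n → S → CEv S n
  | loss : Fin n → Fin n → ℕ → CEv S n

/-- A configuration of one communication channel: a queue of pairs
(event, number of ticks since it was enqueued). -/
abbrev Chan (S : Type) := List (S × ℕ)

/-- A global configuration of all channels. -/
abbrev Cfg (S : Type) (n : ℕ) := Fin n → Fin n → Chan S

/-- The all-empty configuration. -/
def emptyCfg (S : Type) (n : ℕ) : Cfg S n := fun _ _ => []

/-- The `TIME` operator: increments every counter; defined iff every
incremented counter is still at most the delay bound `N i j`. -/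
noncomputable def timeOp {S : Type} {n : ℕ} (N : Fin n → Fin n → ℕ)
    (θ : Cfg S n) : Option (Cfg S n) :=
  if ∀ i j : Fin n, ∀ p ∈ θ i j, p.2 + 1 ≤ N i j then
    some fun i j => (θ i j).map fun p => (p.1, p.2 + 1)
  else none

/-- The `IN` operator: when `σ` occurs in the plant, append `(σ, 0)` to every
channel `CH_ij` with `σ ∈ Σij`. -/
noncomputable def inOp {S : Type} {n : ℕ} (Sij : Fin n → Fin n → Set S)
    (θ : Cfg S n) (σ : S) : Cfg S n :=
  fun i j => if σ ∈ Sij i j then θ i j ++ [(σ, 0)] else θ i j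

/-- The `OUT_ij` operator: defined iff channel `CH_ij` is nonempty and its
first entry carries the event `σ`; removes that first entry. -/
noncomputable def outOp {S : Type} {n : ℕ} (i j : Fin n) (θ : Cfg S n)
    (σ : S) : Option (Cfg S n) :=
  match θ i j with
  | [] => none
  | p :: rest =>
      if p.1 = σ then
        some fun i' j' => if i' = i ∧ j' = j then rest else θ i' j'
      else none

/-- The `LOSS_ij` operator: defined iff `1 ≤ d`, channel `CH_ij` has length at
least `d`, and the event of its `d`-th entry is losable; removes that entry. -/
noncomputable def lossOp {S : Type} {n : ℕ} (SLij : Fin n → Fin n → Set S)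
    (i j : Fin n) (θ : Cfg S n) (d : ℕ) : Option (Cfg S n) :=
  if 1 ≤ d ∧ d ≤ (θ i j).length ∧ ∃ p ∈ (θ i j)[d - 1]?, p.1 ∈ SLij i j then
    some fun i' j' =>
      if i' = i ∧ j' = j then (θ i j).take (d - 1) ++ (θ i j).drop d
      else θ i' j'
  else none

/-- One step of the communication automaton `G̃`. -/
noncomputable def cstep {Q S : Type} {n : ℕ} (δ : Q → PEv S → Option Q)
    (N : Fin n → Fin n → ℕ) (Sij SLij : Fin n → Fin n → Set S) :
    Q × Cfg S n → CEv S n → Option (Q × Cfg S n)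
  | (q, θ), CEv.tick =>
      match δ q PEv.tick, timeOp N θ with
      | some q', some θ' => some (q', θ')
      | _, _ => none
  | (q, θ), CEv.ev σ => (δ q (PEv.ev σ)).map fun q' => (q', inOp Sij θ σ)
  | (q, θ), CEv.del i j σ =>
      if σ ∈ Sij i j then (outOp i j θ σ).map fun θ' => (q, θ') else none
  | (q, θ), CEv.loss i j d => (lossOp SLij i j θ d).map fun θ' => (q, θ')

/-- The run of `G̃` on a string of events. -/
noncomputable def crun {Q S : Type} {n : ℕ} (δ : Q → PEv S → Option Q)
    (N : Fin n → Fin n → ℕ) (Sij SLij : Fin n → Fin n → Set S) :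
    Q × Cfg S n → List (CEv S n) → Option (Q × Cfg S n)
  | x, [] => some x
  | x, e :: μ => (cstep δ N Sij SLij x e).bind fun x' => crun δ N Sij SLij x' μ

/-- The run of the plant `G` on a string of plant events. -/
def prun {Q S : Type} (δ : Q → PEv S → Option Q) :
    Q → List (PEv S) → Option Q
  | q, [] => some q
  | q, e :: s => (δ q e).bind fun q' => prun δ q' s

/-- The language `L(G)` of the plant. -/
def plantLang {Q S : Type} (δ : Q → PEv S → Option Q) (q0 : Q) :
    Set (List (PEv S)) :=
  {s | (prun δ q0 s).isSome}

/-- The language `L(G̃)` of the communication automaton. -/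
noncomputable def commLang {Q S : Type} {n : ℕ} (δ : Q → PEv S → Option Q)
    (q0 : Q) (N : Fin n → Fin n → ℕ) (Sij SLij : Fin n → Fin n → Set S) :
    Set (List (CEv S n)) :=
  {μ | (crun δ N Sij SLij (q0, emptyCfg S n) μ).isSome}

/-- The projection `ψ` erasing delivery and loss events. -/
def proj {S : Type} {n : ℕ} : List (CEv S n) → List (PEv S) :=
  List.filterMap fun e =>
    match e with
    | CEv.tick => some PEv.tick
    | CEv.ev σ => some (PEv.ev σ)
    | CEv.del _ _ _ => none
    | CEv.loss _ _ _ => none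

/-- The delivery events `f_ij(σ)` for all pairs `(i,j)` with `σ ∈ Σij`,
listed in a fixed order of the pairs. -/
noncomputable def deliveries {S : Type} (n : ℕ) (Sij : Fin n → Fin n → Set S)
    (σ : S) : List (CEv S n) :=
  ((List.finRange n) ×ˢ (List.finRange n)).filterMap fun p =>
    if σ ∈ Sij p.1 p.2 then some (CEv.del p.1 p.2 σ) else none

/-- The lift of a plant string: insert, immediately after each occurrence of
each event `σ ∈ Σ`, the delivery events `f_ij(σ)` for every pair `(i,j)` with
`σ ∈ Σij`. -/
noncomputable def liftStr {S : Type} (n : ℕ) (Sij : Fin n → Fin n → Set S) :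
    List (PEv S) → List (CEv S n)
  | [] => []
  | PEv.tick :: s => CEv.tick :: liftStr n Sij s
  | PEv.ev σ :: s => CEv.ev σ :: (deliveries n Sij σ ++ liftStr n Sij s)

section Aux

variable {Q S : Type} {n : ℕ} (δ : Q → PEv S → Option Q)
    (N : Fin n → Fin n → ℕ) (Sij SLij : Fin n → Fin n → Set S)

lemma crun_append (x : Q × Cfg S n) (a b : List (CEv S n)) :
    crun δ N Sij SLij x (a ++ b) =
      (crun δ N Sij SLij x a).bind fun x' => crun δ N Sij SLij x' b := by
  induction a generalizing x with
  | nil => simp [crun]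
  | cons e t ih =>
    simp only [List.cons_append, crun]
    cases cstep δ N Sij SLij x e with
    | none => simp
    | some x' => simp [ih]

/-- Configuration containing `(σ,0)` exactly on the channels in `L` that
communicate `σ`. -/
noncomputable def cfgOf (L : List (Fin n × Fin n)) (σ : S) : Cfg S n :=
  fun i j => if (i, j) ∈ L ∧ σ ∈ Sij i j then [(σ, 0)] else []

lemma crun_deliveries_aux (q : Q) (σ : S) (L : List (Fin n × Fin n))
    (hnd : L.Nodup) :
    crun δ N Sij SLij (q, cfgOf Sij L σ)
      (L.filterMap fun p =>
        if σ ∈ Sij p.1 p.2 then some (CEv.del p.1 p.2 σ) else none) =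
      some (q, emptyCfg S n) := by
  induction L with
  | nil =>
    have : cfgOf Sij ([] : List (Fin n × Fin n)) σ = emptyCfg S n := by
      funext i j; simp [cfgOf, emptyCfg]
    simp [this, crun]
  | cons p L' ih =>
    obtain ⟨i, j⟩ := p
    have hnotmem : (i, j) ∉ L' := (List.nodup_cons.mp hnd).1
    have hnd' : L'.Nodup := (List.nodup_cons.mp hnd).2
    by_cases h : σ ∈ Sij i j
    · have hhead : cfgOf Sij ((i, j) :: L') σ i j = [(σ, 0)] := by
        simp [cfgOf, h]
      simp only [List.filterMap_cons, h, if_pos, crun]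
      have hstep : cstep δ N Sij SLij (q, cfgOf Sij ((i, j) :: L') σ)
          (CEv.del i j σ) = some (q, cfgOf Sij L' σ) := by
        simp only [cstep, h, if_pos, outOp, hhead]
        simp only [if_pos rfl, Option.map_some, Option.some.injEq,
          Prod.mk.injEq, true_and]
        funext i' j'
        by_cases hij : i' = i ∧ j' = j
        · obtain ⟨rfl, rfl⟩ := hij
          simp [cfgOf, hnotmem]
        · simp only [if_neg hij, cfgOf]
          have : ((i', j') ∈ (i, j) :: L') ↔ ((i', j') ∈ L') := by
            simp only [List.mem_cons]
            constructor
            · rintro (heq | hm)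
              · exact absurd ⟨congrArg Prod.fst heq, congrArg Prod.snd heq⟩ hij
              · exact hm
            · exact Or.inr
          simp [this]
      rw [hstep]
      simpa using ih hnd'
    · have hcfg : cfgOf Sij ((i, j) :: L') σ = cfgOf Sij L' σ := by
        funext i' j'
        by_cases hij : (i', j') = (i, j)
        · obtain ⟨rfl, rfl⟩ : i' = i ∧ j' = j :=
            ⟨congrArg Prod.fst hij, congrArg Prod.snd hij⟩
          simp [cfgOf, h, hnotmem]
        · have hij' : ¬(i' = i ∧ j' = j) := fun ⟨h1, h2⟩ => hij (by subst h1; subst h2; rfl)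
          simp [cfgOf, List.mem_cons, Prod.mk.injEq, hij']
      simp only [List.filterMap_cons, h, if_neg, hcfg]
      exact ih hnd'

lemma timeOp_empty : timeOp N (emptyCfg S n) = some (emptyCfg S n) := by
  simp only [timeOp, emptyCfg]
  refine (if_pos (by intro i j p hp; simp at hp)).trans ?_
  rfl

lemma inOp_empty (σ : S) :
    inOp Sij (emptyCfg S n) σ =
      cfgOf Sij ((List.finRange n) ×ˢ (List.finRange n)) σ := by
  funext i j
  simp [inOp, cfgOf, emptyCfg, List.mem_product, List.mem_finRange]

lemma crun_lift (q : Q) (s : List (PEv S)) :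
    crun δ N Sij SLij (q, emptyCfg S n) (liftStr n Sij s) =
      (prun δ q s).map fun q' => (q', emptyCfg S n) := by
  induction s generalizing q with
  | nil => simp [liftStr, crun, prun]
  | cons e s ih =>
    cases e with
    | tick =>
      simp only [liftStr, crun, prun, cstep, timeOp_empty]
      cases h : δ q PEv.tick with
      | none => simp
      | some q' => simp [ih]
    | ev σ =>
      simp only [liftStr, crun, prun, cstep]
      cases h : δ q (PEv.ev σ) with
      | none => simp
      | some q' =>
        simp only [Option.map_some, Option.bind_some, Option.bind_eq_bind]
        rw [crun_append, inOp_empty]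
        have hnd : (((List.finRange n) ×ˢ (List.finRange n)) :
            List (Fin n × Fin n)).Nodup :=
          (List.nodup_finRange n).product (List.nodup_finRange n)
        rw [show deliveries n Sij σ =
            ((List.finRange n) ×ˢ (List.finRange n)).filterMap fun p =>
              if σ ∈ Sij p.1 p.2 then some (CEv.del p.1 p.2 σ) else none
          from rfl]
        rw [crun_deliveries_aux δ N Sij SLij q' σ _ hnd]
        simpa using ih q'

lemma proj_deliveries (σ : S) (t : List (CEv S n)) :
    proj (deliveries n Sij σ ++ t) = proj t := by
  have : proj (deliveries n Sij σ) = [] := by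
    simp only [proj, deliveries, List.filterMap_filterMap]
    apply List.filterMap_eq_nil_iff.mpr
    intro p _
    by_cases h : σ ∈ Sij p.1 p.2 <;> simp [h]
  unfold proj at this ⊢
  rw [List.filterMap_append, this, List.nil_append]

lemma proj_lift (s : List (PEv S)) : proj (liftStr n Sij s) = s := by
  induction s with
  | nil => simp [liftStr, proj]
  | cons e s ih =>
    cases e with
    | tick => simpa [liftStr, proj] using ih
    | ev σ =>
      show proj (CEv.ev σ :: (deliveries n Sij σ ++ liftStr n Sij s)) = _
      rw [show proj (CEv.ev σ :: (deliveries n Sij σ ++ liftStr n Sij s)) =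
        PEv.ev σ :: proj (deliveries n Sij σ ++ liftStr n Sij s) from rfl]
      rw [proj_deliveries, ih]

end Aux

/-- Lifting lemma (second half of Proposition 1): for every `s ∈ L(G)`, the
lifted string belongs to `L(G̃)` and projects back to `s`; consequently
`L(G) ⊆ ψ(L(G̃))`. -/
theorem lift_mem_commLang {Q S : Type} {n : ℕ}
    (δ : Q → PEv S → Option Q) (q0 : Q) (N : Fin n → Fin n → ℕ)
    (Sij SLij : Fin n → Fin n → Set S)
    (hL : ∀ i j : Fin n, SLij i j ⊆ Sij i j) :
    (∀ s ∈ plantLang δ q0,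
        liftStr n Sij s ∈ commLang δ q0 N Sij SLij ∧
          proj (liftStr n Sij s) = s) ∧
      plantLang δ q0 ⊆ proj '' commLang δ q0 N Sij SLij := by
  constructor
  · intro s hs
    refine ⟨?_, proj_lift Sij s⟩
    simp only [commLang, Set.mem_setOf_eq, crun_lift δ N Sij SLij q0 s]
    simpa [plantLang, Option.isSome_map] using hs
  · intro s hs
    refine ⟨liftStr n Sij s, ?_, proj_lift Sij s⟩
    simp only [commLang, Set.mem_setOf_eq, crun_lift δ N Sij SLij q0 s]
    simpa [plantLang, Option.isSome_map] using hs
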